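/- Let C₁, C₂, C̃₁, C̃₂ be germs at 0 of closed subsets of Euclidean spaces with C₁ ∩ C₂ = {0}, C̃₁ ∩ C̃₂ = {0}, and with well-defined finite contacts Cont(C₁, C₂) ≠ Cont(C̃₁, C̃₂). Set α₀² = min{Cont(C̃₁,C̃₂)/Cont(C₁,C₂), Cont(C₁,C₂)/Cont(C̃₁,C̃₂)} < 1. Then for every α with α₀ < α < 1, there is no bi-α-Hölder homeomorphism h : (C₁ ∪ C₂, 0) → (C̃₁ ∪ C̃₂, 0) mapping C₁ onto C̃₁ and C₂ onto C̃₂. -/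

import Mathlib

/-!
A bi-`α`-Hölder map `h` with constant `c` sends two points of norm `≥ r` at distance `d` to two
points of norm `≥ r^(1/α)/c` at distance `≤ c d^α`, so
`f_{h C₁, h C₂}(r^(1/α)/c) ≤ c f_{C₁,C₂}(r)^α`. Taking logarithms and letting `r → 0` gives
`α² Cont(C₁,C₂) ≤ Cont(h C₁, h C₂)`. The inverse of `h` is bi-`α`-Hölder too, so also
`α² Cont(h C₁, h C₂) ≤ Cont(C₁,C₂)`: thus `α² ≤ α₀²`.
-/

open Set Filter

/-- The separation function `f_{Γ₁,Γ₂}(r)`. -/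
noncomputable def sep {E : Type*} [NormedAddCommGroup E] (Γ₁ Γ₂ : Set E) (r : ℝ) : ℝ :=
  sInf {d : ℝ | ∃ γ₁ ∈ Γ₁, ∃ γ₂ ∈ Γ₂, r ≤ ‖γ₁‖ ∧ r ≤ ‖γ₂‖ ∧ d = ‖γ₁ - γ₂‖}

/-- `Cont(Γ₁,Γ₂) = L`. -/
def hasCont {E : Type*} [NormedAddCommGroup E] (Γ₁ Γ₂ : Set E) (L : ℝ) : Prop :=
  Tendsto (fun r : ℝ => Real.log (sep Γ₁ Γ₂ r) / Real.log r) (nhdsWithin 0 (Ioi 0)) (nhds L)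

open scoped Topology

section RpowBounds

variable {x y c α : ℝ}

lemma one_div_rpow_mul_rpow_le_of_le_mul_rpow (hx : 0 ≤ x) (hy : 0 ≤ y) (hc : 0 < c)
    (hα : 0 < α) (h : x ≤ c * y ^ α) : 1 / c ^ (1 / α) * x ^ (1 / α) ≤ y := by
  rw [one_div_mul_eq_div, div_le_iff₀' (by positivity)]
  calc x ^ (1 / α) ≤ (c * y ^ α) ^ (1 / α) := by gcongr
    _ = c ^ (1 / α) * y := by
      rw [Real.mul_rpow hc.le (by positivity), one_div, Real.rpow_rpow_inv hy hα.ne']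

lemma le_rpow_mul_rpow_of_one_div_mul_rpow_le (hx : 0 ≤ x) (hc : 0 < c) (hα : 0 < α)
    (h : 1 / c * x ^ (1 / α) ≤ y) : x ≤ c ^ α * y ^ α := by
  rw [one_div_mul_eq_div, div_le_iff₀' hc] at h
  have hy : 0 ≤ y := nonneg_of_mul_nonneg_right ((by positivity : (0 : ℝ) ≤ _).trans h) hc
  calc x = (x ^ (1 / α)) ^ α := by rw [one_div, Real.rpow_inv_rpow hx hα.ne']
    _ ≤ (c * y) ^ α := by gcongr
    _ = c ^ α * y ^ α := Real.mul_rpow hc.le hy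

end RpowBounds

section Contact

variable {E : Type*} [NormedAddCommGroup E]

lemma sep_nonneg (Γ₁ Γ₂ : Set E) (r : ℝ) : 0 ≤ sep Γ₁ Γ₂ r :=
  Real.sInf_nonneg (by rintro d ⟨γ₁, -, γ₂, -, -, -, rfl⟩; exact norm_nonneg _)

lemma sep_le_norm_sub {Γ₁ Γ₂ : Set E} {r : ℝ} {γ₁ γ₂ : E} (hγ₁ : γ₁ ∈ Γ₁) (hγ₂ : γ₂ ∈ Γ₂)
    (hr₁ : r ≤ ‖γ₁‖) (hr₂ : r ≤ ‖γ₂‖) : sep Γ₁ Γ₂ r ≤ ‖γ₁ - γ₂‖ :=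
  csInf_le ⟨0, by rintro d ⟨γ₁, -, γ₂, -, -, -, rfl⟩; exact norm_nonneg _⟩
    ⟨γ₁, hγ₁, γ₂, hγ₂, hr₁, hr₂, rfl⟩

lemma hasCont.eventually_sep_pos {Γ₁ Γ₂ : Set E} {L : ℝ} (hL : hasCont Γ₁ Γ₂ L) (hL0 : L ≠ 0) :
    ∀ᶠ r in 𝓝[>] 0, 0 < sep Γ₁ Γ₂ r := by
  filter_upwards [hL.eventually_ne hL0] with r hr
  refine (sep_nonneg Γ₁ Γ₂ r).lt_of_ne' fun h0 ↦ hr ?_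
  rw [h0, Real.log_zero, zero_div]

end Contact

section Comparison

variable {E F : Type*} [NormedAddCommGroup E] [NormedAddCommGroup F]
  {C₁ C₂ : Set E} {D₁ D₂ : Set F} {a b α : ℝ}

lemma sep_le_mul_rpow_sep (ha : 0 ≤ a) (hb : 0 < b) (hα : 0 < α)
    (H : ∀ γ₁ ∈ C₁, ∀ γ₂ ∈ C₂, ∃ δ₁ ∈ D₁, ∃ δ₂ ∈ D₂,
      1 / a * ‖γ₁‖ ^ (1 / α) ≤ ‖δ₁‖ ∧ 1 / a * ‖γ₂‖ ^ (1 / α) ≤ ‖δ₂‖ ∧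
      ‖δ₁ - δ₂‖ ≤ b * ‖γ₁ - γ₂‖ ^ α)
    {r : ℝ} (hr : 0 ≤ r) (hsep : 0 < sep C₁ C₂ r) :
    sep D₁ D₂ (1 / a * r ^ (1 / α)) ≤ b * sep C₁ C₂ r ^ α := by
  have hne : {d : ℝ | ∃ γ₁ ∈ C₁, ∃ γ₂ ∈ C₂, r ≤ ‖γ₁‖ ∧ r ≤ ‖γ₂‖ ∧ d = ‖γ₁ - γ₂‖}.Nonempty :=
    nonempty_iff_ne_empty.2 fun h ↦ by
      rw [sep, h, Real.sInf_empty] at hsep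
      exact hsep.false
  have hroot : 1 / b ^ (1 / α) * sep D₁ D₂ (1 / a * r ^ (1 / α)) ^ (1 / α) ≤ sep C₁ C₂ r := by
    refine le_csInf hne ?_
    rintro _ ⟨γ₁, hγ₁, γ₂, hγ₂, hr₁, hr₂, rfl⟩
    obtain ⟨δ₁, hδ₁, δ₂, hδ₂, h₁, h₂, h₃⟩ := H γ₁ hγ₁ γ₂ hγ₂
    refine one_div_rpow_mul_rpow_le_of_le_mul_rpow (sep_nonneg _ _ _) (norm_nonneg _) hb hα ?_
    have hs₁ : 1 / a * r ^ (1 / α) ≤ ‖δ₁‖ := le_trans (by gcongr) h₁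
    have hs₂ : 1 / a * r ^ (1 / α) ≤ ‖δ₂‖ := le_trans (by gcongr) h₂
    exact (sep_le_norm_sub hδ₁ hδ₂ hs₁ hs₂).trans h₃
  calc sep D₁ D₂ (1 / a * r ^ (1 / α))
      ≤ (b ^ (1 / α)) ^ α * sep C₁ C₂ r ^ α :=
        le_rpow_mul_rpow_of_one_div_mul_rpow_le (sep_nonneg _ _ _) (by positivity) hα hroot
    _ = b * sep C₁ C₂ r ^ α := by rw [one_div, Real.rpow_inv_rpow hb.le hα.ne']

lemma tendsto_one_div_mul_rpow_nhdsGT_zero (ha : 0 < a) (hα : 0 < α) :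
    Tendsto (fun r : ℝ ↦ 1 / a * r ^ (1 / α)) (𝓝[>] 0) (𝓝[>] 0) := by
  refine tendsto_nhdsWithin_of_tendsto_nhds_of_eventually_within _ ?_ ?_
  · have hcont : ContinuousAt (fun r : ℝ ↦ 1 / a * r ^ (1 / α)) 0 :=
      continuousAt_const.mul (Real.continuousAt_rpow_const 0 _ (Or.inr (by positivity)))
    simpa [Real.zero_rpow (inv_ne_zero hα.ne')] using
      hcont.tendsto.mono_left (nhdsWithin_le_nhds (s := Ioi 0))
  · filter_upwards [self_mem_nhdsWithin] with r (hr : 0 < r)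
    exact mem_Ioi.2 (by positivity)

lemma sq_mul_le_of_eventually_sep_le {K K' : ℝ} (hK : hasCont C₁ C₂ K) (hK' : hasCont D₁ D₂ K')
    (hK0 : K ≠ 0) (hK'0 : K' ≠ 0) (ha : 0 < a) (hb : 0 < b) (hα : 0 < α)
    (hle : ∀ᶠ r in 𝓝[>] 0, sep D₁ D₂ (1 / a * r ^ (1 / α)) ≤ b * sep C₁ C₂ r ^ α) :
    α ^ 2 * K ≤ K' := by
  set s : ℝ → ℝ := fun r ↦ 1 / a * r ^ (1 / α)
  have hs := tendsto_one_div_mul_rpow_nhdsGT_zero ha hα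
  have hlog := Real.tendsto_log_nhdsGT_zero
  have hlog_neg : ∀ᶠ r in 𝓝[>] (0 : ℝ), Real.log r < 0 :=
    hlog.eventually (eventually_lt_atBot 0)
  have hlog_s : ∀ᶠ r in 𝓝[>] (0 : ℝ),
      Real.log (s r) = Real.log r * (1 / α - Real.log a / Real.log r) := by
    filter_upwards [self_mem_nhdsWithin, hlog_neg] with r (hr : 0 < r) hr'
    rw [Real.log_mul (by positivity) (by positivity), Real.log_rpow hr, one_div a,
      Real.log_inv]
    field_simp [hr'.ne]
    ring
  -- after dividing by `log r`, the terms `log b / log r` and `log a / log r` vanish in the limit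
  have hlim : Tendsto (fun r ↦ (Real.log b + α * Real.log (sep C₁ C₂ r)) / Real.log (s r))
      (𝓝[>] 0) (𝓝 (α ^ 2 * K)) := by
    have h := (((tendsto_const_nhds (x := Real.log b)).div_atBot hlog).add (hK.const_mul α)).div
      ((tendsto_const_nhds (x := 1 / α)).sub
        ((tendsto_const_nhds (x := Real.log a)).div_atBot hlog))
      (by simpa using hα.ne')
    refine (h.congr' ?_).trans_eq ?_
    · filter_upwards [hlog_s, hlog_neg] with r hr hr'
      rw [Pi.div_apply, hr, ← mul_div_mul_right _ _ hr'.ne]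
      congr 1
      · field_simp [hr'.ne]
      · ring
    · simp only [zero_add, sub_zero]
      field_simp
  refine le_of_tendsto_of_tendsto hlim (hK'.comp hs) ?_
  filter_upwards [hle, hs.eventually (hK'.eventually_sep_pos hK'0), hK.eventually_sep_pos hK0,
    hs.eventually hlog_neg] with r hr hD hC hs_neg
  refine div_le_div_of_nonpos_of_le hs_neg.le ?_
  calc Real.log (sep D₁ D₂ (s r)) ≤ Real.log (b * sep C₁ C₂ r ^ α) := Real.log_le_log hD hr
    _ = Real.log b + α * Real.log (sep C₁ C₂ r) := by
      rw [Real.log_mul hb.ne' (by positivity), Real.log_rpow hC]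

lemma sq_mul_le_of_forall_exists_holder {K K' : ℝ} (hK : hasCont C₁ C₂ K)
    (hK' : hasCont D₁ D₂ K') (hK0 : K ≠ 0) (hK'0 : K' ≠ 0) (ha : 0 < a) (hb : 0 < b) (hα : 0 < α)
    (H : ∀ γ₁ ∈ C₁, ∀ γ₂ ∈ C₂, ∃ δ₁ ∈ D₁, ∃ δ₂ ∈ D₂,
      1 / a * ‖γ₁‖ ^ (1 / α) ≤ ‖δ₁‖ ∧ 1 / a * ‖γ₂‖ ^ (1 / α) ≤ ‖δ₂‖ ∧
      ‖δ₁ - δ₂‖ ≤ b * ‖γ₁ - γ₂‖ ^ α) :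
    α ^ 2 * K ≤ K' := by
  refine sq_mul_le_of_eventually_sep_le hK hK' hK0 hK'0 ha hb hα ?_
  filter_upwards [self_mem_nhdsWithin, hK.eventually_sep_pos hK0] with r (hr : 0 < r) hsep
  exact sep_le_mul_rpow_sep ha.le hb hα H hr.le hsep

end Comparison

theorem no_biHolder_of_cont_ne_general {n m : ℕ}
    (C₁ C₂ : Set (EuclideanSpace ℝ (Fin n))) (D₁ D₂ : Set (EuclideanSpace ℝ (Fin m)))
    (hint : C₁ ∩ C₂ = {0})
    (K K' : ℝ) (hK : hasCont C₁ C₂ K) (hK' : hasCont D₁ D₂ K')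
    (hK1 : 1 ≤ K) (hK'1 : 1 ≤ K')
    (α₀ : ℝ) (hα₀pos : 0 < α₀) (hα₀ : α₀ ^ 2 = min (K' / K) (K / K')) :
    ∀ α : ℝ, α₀ < α → α < 1 →
      ¬ ∃ (h : EuclideanSpace ℝ (Fin n) → EuclideanSpace ℝ (Fin m)) (c : ℝ),
          0 < c ∧ h 0 = 0 ∧ Set.BijOn h (C₁ ∪ C₂) (D₁ ∪ D₂) ∧
          h '' C₁ = D₁ ∧ h '' C₂ = D₂ ∧
          ∀ p ∈ C₁ ∪ C₂, ∀ q ∈ C₁ ∪ C₂,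
            (1 / c) * ‖p - q‖ ^ (1 / α) ≤ ‖h p - h q‖ ∧ ‖h p - h q‖ ≤ c * ‖p - q‖ ^ α := by
  rintro α hα₀α - ⟨h, c, hc, h0, -, rfl, rfl, hH⟩
  have hα : 0 < α := hα₀pos.trans hα₀α
  have hK0 : 0 < K := by linarith
  have hK'0 : 0 < K' := by linarith
  have h0C : (0 : EuclideanSpace ℝ (Fin n)) ∈ C₁ ∪ C₂ :=
    .inl (hint.symm ▸ rfl : _ ∈ C₁ ∩ C₂).1
  have hnorm (p) (hp : p ∈ C₁ ∪ C₂) : 1 / c * ‖p‖ ^ (1 / α) ≤ ‖h p‖ ∧ ‖h p‖ ≤ c * ‖p‖ ^ α := by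
    simpa only [sub_zero, h0] using hH p hp 0 h0C
  have hforward : α ^ 2 * K ≤ K' :=
    sq_mul_le_of_forall_exists_holder hK hK' hK0.ne' hK'0.ne' hc hc hα fun γ₁ hγ₁ γ₂ hγ₂ ↦
      ⟨h γ₁, mem_image_of_mem h hγ₁, h γ₂, mem_image_of_mem h hγ₂, (hnorm γ₁ (.inl hγ₁)).1,
        (hnorm γ₂ (.inr hγ₂)).1, (hH γ₁ (.inl hγ₁) γ₂ (.inr hγ₂)).2⟩
  have hbackward : α ^ 2 * K' ≤ K := by
    refine sq_mul_le_of_forall_exists_holder (a := c ^ (1 / α)) (b := c ^ α) hK' hK hK'0.ne'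
      hK0.ne' (by positivity) (by positivity) hα ?_
    rintro _ ⟨γ₁, hγ₁, rfl⟩ _ ⟨γ₂, hγ₂, rfl⟩
    refine ⟨γ₁, hγ₁, γ₂, hγ₂, ?_, ?_, ?_⟩
    · exact one_div_rpow_mul_rpow_le_of_le_mul_rpow (norm_nonneg _) (norm_nonneg _) hc hα
        (hnorm γ₁ (.inl hγ₁)).2
    · exact one_div_rpow_mul_rpow_le_of_le_mul_rpow (norm_nonneg _) (norm_nonneg _) hc hα
        (hnorm γ₂ (.inr hγ₂)).2
    · exact le_rpow_mul_rpow_of_one_div_mul_rpow_le (norm_nonneg _) hc hα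
        (hH γ₁ (.inl hγ₁) γ₂ (.inr hγ₂)).1
  have hle : α ^ 2 ≤ α₀ ^ 2 :=
    hα₀ ▸ le_min ((le_div_iff₀ hK0).2 hforward) ((le_div_iff₀ hK'0).2 hbackward)
  have hlt : α₀ ^ 2 < α ^ 2 := by gcongr
  exact hle.not_gt hlt

/-- If the contacts of `(C₁, C₂)` and `(C̃₁, C̃₂)` are distinct, then for every
`α` with `α₀ < α < 1` (where `α₀² = min{Cont(C̃₁,C̃₂)/Cont(C₁,C₂), Cont(C₁,C₂)/Cont(C̃₁,C̃₂)}`)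
there is no bi-`α`-Hölder homeomorphism `(C₁ ∪ C₂, 0) → (C̃₁ ∪ C̃₂, 0)` mapping
`C₁` onto `C̃₁` and `C₂` onto `C̃₂`. -/
theorem no_biHolder_of_cont_ne {n m : ℕ}
    (C₁ C₂ : Set (EuclideanSpace ℝ (Fin n))) (D₁ D₂ : Set (EuclideanSpace ℝ (Fin m)))
    (hC₁ : IsClosed C₁) (hC₂ : IsClosed C₂) (hD₁ : IsClosed D₁) (hD₂ : IsClosed D₂)
    (hint : C₁ ∩ C₂ = {0}) (hint' : D₁ ∩ D₂ = {0})
    (K K' : ℝ) (hK : hasCont C₁ C₂ K) (hK' : hasCont D₁ D₂ K')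
    (hK1 : 1 ≤ K) (hK'1 : 1 ≤ K') (hne : K ≠ K')
    (α₀ : ℝ) (hα₀pos : 0 < α₀) (hα₀ : α₀ ^ 2 = min (K' / K) (K / K')) :
    ∀ α : ℝ, α₀ < α → α < 1 →
      ¬ ∃ (h : EuclideanSpace ℝ (Fin n) → EuclideanSpace ℝ (Fin m)) (c : ℝ),
          0 < c ∧ h 0 = 0 ∧ Set.BijOn h (C₁ ∪ C₂) (D₁ ∪ D₂) ∧
          h '' C₁ = D₁ ∧ h '' C₂ = D₂ ∧
          ∀ p ∈ C₁ ∪ C₂, ∀ q ∈ C₁ ∪ C₂,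
            (1 / c) * ‖p - q‖ ^ (1 / α) ≤ ‖h p - h q‖ ∧ ‖h p - h q‖ ≤ c * ‖p - q‖ ^ α :=
  no_biHolder_of_cont_ne_general C₁ C₂ D₁ D₂ hint K K' hK hK' hK1 hK'1 α₀ hα₀pos hα₀
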